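/- Let D be a finite type and let ρ be a separable density matrix on D × D: there exist a finite index type I, non-negative reals p : I → ℝ with ∑_i p i = 1, and unit vectors α, β : I → (D → ℂ) such that ρ = ∑_i p i · (α_i α_i†) ⊗ (β_i β_i†). Then there exist a finite type R and a density matrix τ on (D × R) × (D × R) such that: (1) τ is an extension of ρ, i.e., ∑_{r, s : R} τ ((a,r),(b,s)) ((c,r),(d,s)) = ρ (a,b) (c,d) for all a, b, c, d : D; (2) τ is unitarily symmetric, i.e., there exist unitary matrices U, V on D × R such that (U ⊗ V) · (S τ S) · (U ⊗ V)† = τ, where S τ S denotes the swap conjugation (S τ S) (x,y) (x',y') = τ (y,x) (y',x') for x, y, x', y' : D × R; and (3) τ has zero correlated coherence with respect to local eigenbases, i.e., there exist unitary matrices W₁, W₂ on D × R with W₁† τ₁ W₁ and W₂† τ₂ W₂ diagonal (τ₁, τ₂ the reduced matrices of τ) and C((W₁ ⊗ W₂)† τ (W₁ ⊗ W₂)) = 0. -/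

import Mathlib

/-!
Give the `i`-th term of `ρ = ∑ᵢ pᵢ |αᵢ⟩⟨αᵢ| ⊗ |βᵢ⟩⟨βᵢ|` a classical flag `|i⟩` on each side:
with `aᵢ = αᵢ ⊗ |i⟩` and `bᵢ = βᵢ ⊗ |i⟩` take `τ = ∑ᵢ pᵢ |aᵢ ⊗ bᵢ⟩⟨aᵢ ⊗ bᵢ|`; tracing out the
flags gives back `ρ`. Vectors with different flags are orthogonal, so if `Aᵢ` is a unitary with
first column `αᵢ`, the block-diagonal unitary `W_A = ⊕ᵢ Aᵢ` sends the basis vector `|d₀, i⟩` to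
`aᵢ`, and likewise `W_B` sends it to `bᵢ`. In these bases `τ` and both of its reduced matrices
are diagonal, and `U = W_A W_B†`, `V = W_B W_A†` map `bᵢ ↦ aᵢ`, `aᵢ ↦ bᵢ`, which undoes the swap.
-/

open Matrix
open scoped Kronecker ComplexOrder

/-- The `l₁`-coherence of a matrix with respect to the standard basis:
the sum of the absolute values of all off-diagonal entries. -/
noncomputable def coh {ι : Type} [Fintype ι] [DecidableEq ι] (M : Matrix ι ι ℂ) : ℝ :=
  ∑ i, ∑ j, if i ≠ j then ‖M i j‖ else 0

lemma coh_eq_zero_of_isDiag {ι : Type} [Fintype ι] [DecidableEq ι] {M : Matrix ι ι ℂ}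
    (h : M.IsDiag) : coh M = 0 :=
  Finset.sum_eq_zero fun i _ => Finset.sum_eq_zero fun j _ => by
    split_ifs with hij
    · rw [h hij, norm_zero]
    · rfl

section KronVec

variable {R : Type*} [CommSemiring R] {k l n m I : Type}

def kronVec (f : n → R) (g : m → R) : n × m → R := fun u => f u.1 * g u.2

@[simp]
lemma kronVec_apply (f : n → R) (g : m → R) (u : n × m) : kronVec f g u = f u.1 * g u.2 := rfl

lemma kronVec_comp_swap (f : n → R) (g : m → R) : kronVec f g ∘ Prod.swap = kronVec g f :=
  funext fun _ => mul_comm _ _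

lemma star_kronVec [StarRing R] (f : n → R) (g : m → R) :
    star (kronVec f g) = kronVec (star f) (star g) :=
  funext fun _ => star_mul' _ _

lemma dotProduct_kronVec [Fintype n] [Fintype m] (f f' : n → R) (g g' : m → R) :
    kronVec f g ⬝ᵥ kronVec f' g' = (f ⬝ᵥ f') * (g ⬝ᵥ g') := by
  simp only [dotProduct, Fintype.sum_prod_type, kronVec_apply, Finset.sum_mul_sum]
  exact Finset.sum_congr rfl fun _ _ => Finset.sum_congr rfl fun _ _ => by ring

lemma star_kronVec_dotProduct_kronVec [StarRing R] [Fintype n] [Fintype m] (f : n → R)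
    (g : m → R) : star (kronVec f g) ⬝ᵥ kronVec f g = (star f ⬝ᵥ f) * (star g ⬝ᵥ g) := by
  rw [star_kronVec, dotProduct_kronVec]

lemma kronVec_single_one [DecidableEq n] [DecidableEq m] (x : n) (y : m) :
    kronVec (Pi.single x (1 : R)) (Pi.single y 1) = Pi.single (x, y) 1 := by
  ext ⟨x', y'⟩
  by_cases hx : x' = x <;> by_cases hy : y' = y <;> simp [hx, hy]

lemma kronecker_mulVec_kronVec [Fintype n] [Fintype m] (M : Matrix k n R) (N : Matrix l m R)
    (f : n → R) (g : m → R) : (M ⊗ₖ N) *ᵥ kronVec f g = kronVec (M *ᵥ f) (N *ᵥ g) := by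
  ext ⟨x, y⟩
  simp only [mulVec, dotProduct, kronVec_apply, kroneckerMap_apply, Fintype.sum_prod_type,
    Finset.sum_mul_sum]
  exact Finset.sum_congr rfl fun _ _ => Finset.sum_congr rfl fun _ _ => by ring

lemma vecMulVec_kronecker_vecMulVec (f f' : n → R) (g g' : m → R) :
    vecMulVec f f' ⊗ₖ vecMulVec g g' = vecMulVec (kronVec f g) (kronVec f' g') := by
  ext ⟨x, y⟩ ⟨x', y'⟩
  simp only [kroneckerMap_apply, vecMulVec_apply, kronVec_apply]
  ring

lemma blockDiagonal_mulVec_kronVec_single [Fintype n] [Fintype I] [DecidableEq I]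
    (M : I → Matrix m n R) (v : n → R) (i : I) :
    blockDiagonal M *ᵥ kronVec v (Pi.single i 1) = kronVec (M i *ᵥ v) (Pi.single i 1) := by
  ext ⟨x, j⟩
  by_cases hj : j = i
  · subst hj
    simp [mulVec, dotProduct, Fintype.sum_prod_type, blockDiagonal_apply, Pi.single_apply]
  · simp [mulVec, dotProduct, Fintype.sum_prod_type, blockDiagonal_apply, Pi.single_apply, hj]

end KronVec

section Mixture

variable {n m I : Type} [Fintype I]

noncomputable def mixture (p : I → ℝ) (v : I → n → ℂ) : Matrix n n ℂ :=
  ∑ i, (p i : ℂ) • vecMulVec (v i) (star (v i))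

variable {p : I → ℝ} {v : I → n → ℂ}

lemma mixture_apply (x y : n) : mixture p v x y = ∑ i, (p i : ℂ) * (v i x * star (v i y)) := by
  simp [mixture, Matrix.sum_apply, vecMulVec_apply]

lemma posSemidef_mixture [Fintype n] (hp : ∀ i, 0 ≤ p i) : (mixture p v).PosSemidef :=
  posSemidef_sum _ fun i _ =>
    (posSemidef_vecMulVec_self_star (v i)).smul (Complex.zero_le_real.mpr (hp i))

lemma trace_mixture [Fintype n] (hv : ∀ i, star (v i) ⬝ᵥ v i = 1) :
    (mixture p v).trace = ∑ i, (p i : ℂ) := by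
  simp only [mixture, trace_sum, trace_smul, trace_vecMulVec, dotProduct_comm (v _), hv,
    smul_eq_mul, mul_one]

lemma mul_mixture_mul_conjTranspose [Fintype n] (M : Matrix m n ℂ) :
    M * mixture p v * Mᴴ = mixture p fun i => M *ᵥ v i := by
  simp only [mixture, Matrix.mul_sum, Matrix.sum_mul, Matrix.mul_smul, Matrix.smul_mul,
    mul_vecMulVec, vecMulVec_mul, star_mulVec]

lemma conjTranspose_mul_mixture_mul [Fintype n] (M : Matrix n m ℂ) :
    Mᴴ * mixture p v * M = mixture p fun i => Mᴴ *ᵥ v i := by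
  simpa using mul_mixture_mul_conjTranspose Mᴴ

lemma mixture_submatrix (e : m → n) :
    (mixture p v).submatrix e e = mixture p fun i => v i ∘ e := by
  ext x y
  simp [mixture_apply]

lemma isDiag_mixture_single [DecidableEq n] (e : I → n) :
    (mixture p fun i => Pi.single (e i) 1).IsDiag := by
  intro x y hxy
  rw [mixture_apply]
  refine Finset.sum_eq_zero fun i _ => ?_
  by_cases hx : x = e i
  · simp [hx, Ne.symm (hx ▸ hxy)]
  · simp [hx]

end Mixture

section PartialTrace

variable {R : Type*} [AddCommMonoid R] {n m : Type}

def partialTraceRight [Fintype m] (τ : Matrix (n × m) (n × m) R) : Matrix n n R :=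
  of fun x x' => ∑ y, τ (x, y) (x', y)

def partialTraceLeft [Fintype n] (τ : Matrix (n × m) (n × m) R) : Matrix m m R :=
  of fun y y' => ∑ x, τ (x, y) (x, y')

end PartialTrace

section MixtureKronVec

variable {n m k l I : Type} [Fintype I] {p : I → ℝ}

lemma mixture_kronVec (f : I → n → ℂ) (g : I → m → ℂ) :
    (mixture p fun i => kronVec (f i) (g i)) =
      ∑ i, (p i : ℂ) • (vecMulVec (f i) (star (f i)) ⊗ₖ vecMulVec (g i) (star (g i))) := by
  simp only [mixture, vecMulVec_kronecker_vecMulVec, star_kronVec]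

lemma partialTraceRight_mixture_kronVec [Fintype m] (f : I → n → ℂ) {g : I → m → ℂ}
    (hg : ∀ i, star (g i) ⬝ᵥ g i = 1) :
    partialTraceRight (mixture p fun i => kronVec (f i) (g i)) = mixture p f := by
  ext x x'
  simp only [partialTraceRight, of_apply, mixture_apply, kronVec_apply, star_mul']
  rw [Finset.sum_comm]
  refine Finset.sum_congr rfl fun i _ => ?_
  have hgi := hg i
  simp only [dotProduct, Pi.star_apply] at hgi
  calc ∑ y, (p i : ℂ) * (f i x * g i y * (star (f i x') * star (g i y)))
      = (p i : ℂ) * (f i x * star (f i x')) * ∑ y, star (g i y) * g i y := by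
        rw [Finset.mul_sum]
        exact Finset.sum_congr rfl fun _ _ => by ring
    _ = _ := by rw [hgi, mul_one]

lemma partialTraceLeft_mixture_kronVec [Fintype n] {f : I → n → ℂ} (g : I → m → ℂ)
    (hf : ∀ i, star (f i) ⬝ᵥ f i = 1) :
    partialTraceLeft (mixture p fun i => kronVec (f i) (g i)) = mixture p g := by
  change partialTraceRight
    ((mixture p fun i => kronVec (f i) (g i)).submatrix Prod.swap Prod.swap) = _
  rw [mixture_submatrix]
  simp only [kronVec_comp_swap]
  exact partialTraceRight_mixture_kronVec g hf

lemma partialTraceRight_mixture_kronVec_submatrix_prodProdProdComm [Fintype k] [Fintype l]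
    (f₁ : I → n → ℂ) (f₂ : I → m → ℂ) {g₁ : I → k → ℂ} {g₂ : I → l → ℂ}
    (hg₁ : ∀ i, star (g₁ i) ⬝ᵥ g₁ i = 1) (hg₂ : ∀ i, star (g₂ i) ⬝ᵥ g₂ i = 1) :
    partialTraceRight
        ((mixture p fun i => kronVec (kronVec (f₁ i) (g₁ i)) (kronVec (f₂ i) (g₂ i))).submatrix
          (Equiv.prodProdProdComm n m k l) (Equiv.prodProdProdComm n m k l)) =
      mixture p fun i => kronVec (f₁ i) (f₂ i) := by
  rw [mixture_submatrix]
  have hreorder : ∀ i, kronVec (kronVec (f₁ i) (g₁ i)) (kronVec (f₂ i) (g₂ i)) ∘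
      Equiv.prodProdProdComm n m k l = kronVec (kronVec (f₁ i) (f₂ i)) (kronVec (g₁ i) (g₂ i)) :=
    fun i => funext fun _ => by simp only [Function.comp_apply, kronVec_apply,
      Equiv.prodProdProdComm_apply]; ring
  simp only [hreorder]
  refine partialTraceRight_mixture_kronVec _ fun i => ?_
  rw [star_kronVec_dotProduct_kronVec, hg₁, hg₂, mul_one]

lemma kronecker_conj_mixture_kronVec_swap [Fintype n] [Fintype m] {f : I → n → ℂ}
    {g : I → m → ℂ} {U : Matrix n m ℂ} {V : Matrix m n ℂ} (hU : ∀ i, U *ᵥ g i = f i)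
    (hV : ∀ i, V *ᵥ f i = g i) :
    (U ⊗ₖ V) * (mixture p fun i => kronVec (f i) (g i)).submatrix Prod.swap Prod.swap *
      (U ⊗ₖ V)ᴴ = mixture p fun i => kronVec (f i) (g i) := by
  simp only [mixture_submatrix, mul_mixture_mul_conjTranspose, kronVec_comp_swap,
    kronecker_mulVec_kronVec, hU, hV]

end MixtureKronVec

section Unitary

variable {n I : Type} [Fintype n] [DecidableEq n]

lemma conjTranspose_mulVec_of_mulVec_eq {W : Matrix n n ℂ} (hW : W ∈ unitaryGroup n ℂ)
    {x y : n → ℂ} (h : W *ᵥ x = y) : Wᴴ *ᵥ y = x := by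
  rw [← h, mulVec_mulVec, ← star_eq_conjTranspose, mem_unitaryGroup_iff'.mp hW, one_mulVec]

lemma exists_mem_unitaryGroup_mulVec_single_eq (x₀ : n) {v : n → ℂ} (hv : star v ⬝ᵥ v = 1) :
    ∃ A ∈ unitaryGroup n ℂ, A *ᵥ Pi.single x₀ 1 = v := by
  let e := EuclideanSpace.basisFun n ℂ
  have hunit : Orthonormal ℂ (({x₀} : Set n).domRestrict fun _ => WithLp.toLp 2 v) := by
    rw [orthonormal_subsingleton_iff]
    intro _
    rw [← pow_eq_one_iff_of_nonneg (norm_nonneg _) two_ne_zero, ← RCLike.ofReal_inj (K := ℂ),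
      RCLike.ofReal_pow, ← inner_self_eq_norm_sq_to_K, EuclideanSpace.inner_eq_star_dotProduct]
    simpa [dotProduct_comm] using hv
  obtain ⟨b, hb⟩ := hunit.exists_orthonormalBasis_extension_of_card_eq (by simp)
  refine ⟨e.toBasis.toMatrix b, e.toMatrix_orthonormalBasis_mem_unitary b, ?_⟩
  ext x
  simp [Module.Basis.toMatrix_apply, e, hb x₀ rfl]

lemma exists_mem_unitaryGroup_mulVec_single_eq_kronVec [Fintype I] [DecidableEq I] (x₀ : n)
    {v : I → n → ℂ} (hv : ∀ i, star (v i) ⬝ᵥ v i = 1) :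
    ∃ W ∈ unitaryGroup (n × I) ℂ,
      ∀ i, W *ᵥ Pi.single (x₀, i) 1 = kronVec (v i) (Pi.single i 1) := by
  choose A hA hAv using fun i => exists_mem_unitaryGroup_mulVec_single_eq x₀ (hv i)
  refine ⟨blockDiagonal A, ?_, fun i => ?_⟩
  · rw [mem_unitaryGroup_iff', star_eq_conjTranspose, blockDiagonal_conjTranspose,
      ← blockDiagonal_mul, ← blockDiagonal_one]
    exact congrArg blockDiagonal (funext fun i => mem_unitaryGroup_iff'.mp (hA i))
  · rw [← kronVec_single_one, blockDiagonal_mulVec_kronVec_single, hAv]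

lemma isDiag_conjTranspose_mul_mixture_mul [Fintype I] {p : I → ℝ} {v : I → n → ℂ}
    {W : Matrix n n ℂ} (hW : W ∈ unitaryGroup n ℂ) {e : I → n}
    (hv : ∀ i, W *ᵥ Pi.single (e i) 1 = v i) : (Wᴴ * mixture p v * W).IsDiag := by
  rw [conjTranspose_mul_mixture_mul]
  simp only [fun i => conjTranspose_mulVec_of_mulVec_eq hW (hv i)]
  exact isDiag_mixture_single e

end Unitary

theorem stmt_7_general {D : Type} [Fintype D] [DecidableEq D]
    (ρ : Matrix (D × D) (D × D) ℂ)
    (I : Type) [Fintype I] (p : I → ℝ) (α β : I → D → ℂ)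
    (hp : ∀ i, 0 ≤ p i) (hpsum : (∑ i, p i) = 1)
    (hα : ∀ i, ∑ x, star (α i x) * α i x = 1)
    (hβ : ∀ i, ∑ x, star (β i x) * β i x = 1)
    (hsep : ρ = ∑ i, (p i : ℂ) •
      ((Matrix.of fun x y : D => α i x * star (α i y)) ⊗ₖ
        (Matrix.of fun x y : D => β i x * star (β i y)))) :
    ∃ (R : Type) (_ : Fintype R) (_ : DecidableEq R)
      (τ : Matrix ((D × R) × (D × R)) ((D × R) × (D × R)) ℂ),
      τ.PosSemidef ∧ τ.trace = 1 ∧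
      -- (1) τ is an extension of ρ
      (∀ a b c d : D,
        (∑ r : R, ∑ s : R, τ ((a, r), (b, s)) ((c, r), (d, s))) = ρ (a, b) (c, d)) ∧
      -- (2) τ is unitarily symmetric
      (∃ U V : Matrix (D × R) (D × R) ℂ,
        U ∈ Matrix.unitaryGroup (D × R) ℂ ∧ V ∈ Matrix.unitaryGroup (D × R) ℂ ∧
        (U ⊗ₖ V) *
          (Matrix.of fun u v : (D × R) × (D × R) => τ (u.2, u.1) (v.2, v.1)) *
          (U ⊗ₖ V)ᴴ = τ) ∧
      -- (3) τ has zero correlated coherence with respect to local eigenbases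
      (∃ W₁ W₂ : Matrix (D × R) (D × R) ℂ,
        W₁ ∈ Matrix.unitaryGroup (D × R) ℂ ∧ W₂ ∈ Matrix.unitaryGroup (D × R) ℂ ∧
        (W₁ᴴ * (Matrix.of fun x x' : D × R => ∑ y : D × R, τ (x, y) (x', y)) * W₁).IsDiag ∧
        (W₂ᴴ * (Matrix.of fun y y' : D × R => ∑ x : D × R, τ (x, y) (x, y')) * W₂).IsDiag ∧
        coh ((W₁ ⊗ₖ W₂)ᴴ * τ * (W₁ ⊗ₖ W₂)) = 0) := by
  classical
  obtain ⟨i₀, -⟩ := Finset.exists_ne_zero_of_sum_ne_zero (hpsum ▸ one_ne_zero)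
  obtain ⟨d₀, -⟩ := Finset.exists_ne_zero_of_sum_ne_zero ((hα i₀).symm ▸ one_ne_zero)
  have hflag : ∀ i : I, star (Pi.single i 1 : I → ℂ) ⬝ᵥ Pi.single i 1 = 1 := by simp
  set a := fun i => kronVec (α i) (Pi.single i 1)
  set b := fun i => kronVec (β i) (Pi.single i 1)
  have ha : ∀ i, star (a i) ⬝ᵥ a i = 1 := fun i => by
    rw [star_kronVec_dotProduct_kronVec, hflag, mul_one]; exact hα i
  have hb : ∀ i, star (b i) ⬝ᵥ b i = 1 := fun i => by
    rw [star_kronVec_dotProduct_kronVec, hflag, mul_one]; exact hβ i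
  obtain ⟨WA, hWA, hWAa⟩ : ∃ W ∈ unitaryGroup (D × I) ℂ, ∀ i, W *ᵥ Pi.single (d₀, i) 1 = a i :=
    exists_mem_unitaryGroup_mulVec_single_eq_kronVec d₀ hα
  obtain ⟨WB, hWB, hWBb⟩ : ∃ W ∈ unitaryGroup (D × I) ℂ, ∀ i, W *ᵥ Pi.single (d₀, i) 1 = b i :=
    exists_mem_unitaryGroup_mulVec_single_eq_kronVec d₀ hβ
  have hρ : ρ = mixture p fun i => kronVec (α i) (β i) := by rw [hsep, mixture_kronVec]; rfl
  refine ⟨I, inferInstance, inferInstance, mixture p fun i => kronVec (a i) (b i),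
    posSemidef_mixture hp, ?_, fun x y z w => ?_, ⟨WA * WBᴴ, WB * WAᴴ, ?_⟩, ⟨WA, WB, ?_⟩⟩
  · rw [trace_mixture fun i => by rw [star_kronVec_dotProduct_kronVec, ha, hb, mul_one]]
    exact_mod_cast hpsum
  · rw [hρ, ← partialTraceRight_mixture_kronVec_submatrix_prodProdProdComm α β hflag hflag]
    exact (Fintype.sum_prod_type' _).symm
  · refine ⟨mul_mem hWA (Unitary.star_mem hWB), mul_mem hWB (Unitary.star_mem hWA),
      kronecker_conj_mixture_kronVec_swap (fun i => ?_) (fun i => ?_)⟩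
    · rw [← mulVec_mulVec, conjTranspose_mulVec_of_mulVec_eq hWB (hWBb i), hWAa]
    · rw [← mulVec_mulVec, conjTranspose_mulVec_of_mulVec_eq hWA (hWAa i), hWBb]
  · refine ⟨hWA, hWB, ?_, ?_, coh_eq_zero_of_isDiag ?_⟩
    · rw [show (of fun x x' => _) = _ from partialTraceRight_mixture_kronVec a hb]
      exact isDiag_conjTranspose_mul_mixture_mul hWA hWAa
    · rw [show (of fun y y' => _) = _ from partialTraceLeft_mixture_kronVec b ha]
      exact isDiag_conjTranspose_mul_mixture_mul hWB hWBb
    · refine isDiag_conjTranspose_mul_mixture_mul (kronecker_mem_unitary hWA hWB)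
        (e := fun i => ((d₀, i), (d₀, i))) fun i => ?_
      rw [← kronVec_single_one, kronecker_mulVec_kronVec, hWAa, hWBb]

/-- Every separable bipartite state admits a unitarily symmetric extension
with zero correlated coherence with respect to the local eigenbases of the
extension's reduced states. -/
theorem stmt_7 {D : Type} [Fintype D] [DecidableEq D]
    (ρ : Matrix (D × D) (D × D) ℂ) (hρ : ρ.PosSemidef) (htr : ρ.trace = 1)
    (I : Type) [Fintype I] (p : I → ℝ) (α β : I → D → ℂ)
    (hp : ∀ i, 0 ≤ p i) (hpsum : (∑ i, p i) = 1)
    (hα : ∀ i, ∑ x, star (α i x) * α i x = 1)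
    (hβ : ∀ i, ∑ x, star (β i x) * β i x = 1)
    (hsep : ρ = ∑ i, (p i : ℂ) •
      ((Matrix.of fun x y : D => α i x * star (α i y)) ⊗ₖ
        (Matrix.of fun x y : D => β i x * star (β i y)))) :
    ∃ (R : Type) (_ : Fintype R) (_ : DecidableEq R)
      (τ : Matrix ((D × R) × (D × R)) ((D × R) × (D × R)) ℂ),
      τ.PosSemidef ∧ τ.trace = 1 ∧
      -- (1) τ is an extension of ρ
      (∀ a b c d : D,
        (∑ r : R, ∑ s : R, τ ((a, r), (b, s)) ((c, r), (d, s))) = ρ (a, b) (c, d)) ∧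
      -- (2) τ is unitarily symmetric
      (∃ U V : Matrix (D × R) (D × R) ℂ,
        U ∈ Matrix.unitaryGroup (D × R) ℂ ∧ V ∈ Matrix.unitaryGroup (D × R) ℂ ∧
        (U ⊗ₖ V) *
          (Matrix.of fun u v : (D × R) × (D × R) => τ (u.2, u.1) (v.2, v.1)) *
          (U ⊗ₖ V)ᴴ = τ) ∧
      -- (3) τ has zero correlated coherence with respect to local eigenbases
      (∃ W₁ W₂ : Matrix (D × R) (D × R) ℂ,
        W₁ ∈ Matrix.unitaryGroup (D × R) ℂ ∧ W₂ ∈ Matrix.unitaryGroup (D × R) ℂ ∧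
        (W₁ᴴ * (Matrix.of fun x x' : D × R => ∑ y : D × R, τ (x, y) (x', y)) * W₁).IsDiag ∧
        (W₂ᴴ * (Matrix.of fun y y' : D × R => ∑ x : D × R, τ (x, y) (x, y')) * W₂).IsDiag ∧
        coh ((W₁ ⊗ₖ W₂)ᴴ * τ * (W₁ ⊗ₖ W₂)) = 0) :=
  stmt_7_general ρ I p α β hp hpsum hα hβ hsep
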